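/- Consider an SRLK steady-state branch with a unique limiting component, i.e. there is an index i0 ∈ {1, …, n} such that N_{i0} < N_i for all i ≠ i0. Then there exists a constant c_{i0} > 0 such that L·x_{i0}(L) → c_{i0} as L → +∞, and for every i ∈ {1, …, n} with i ≠ i0 there exists a constant c_i > 0 such that x_i(L) → c_i as L → +∞. -/

import Mathlib

/-! SRLK model with `n+1` trans-membrane chains `X_1, …, X_{n+1}` (indexed by
`Fin (n+1)`, so the paper's "`n ≥ 1` chains" corresponds to `n+1` here), an extrinsic
kinase `Z` with affinity `K0`, signalling affinities `K i`, dummy affinities `K' i`,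
and total copy numbers `Nz` and `N i`. -/

/-- The signalling function `σ = K0·z·L·Π_j (K_j·x_j)`. -/
def srlkSigma (n : ℕ) (K0 : ℝ) (K : Fin (n+1) → ℝ) (z L : ℝ)
    (x : Fin (n+1) → ℝ) : ℝ :=
  K0 * z * L * ∏ j, (K j * x j)

/-- The dummy function `δ = L·Π_j (K'_j·x_j)`. -/
def srlkDelta (n : ℕ) (K' : Fin (n+1) → ℝ) (L : ℝ) (x : Fin (n+1) → ℝ) : ℝ :=
  L * ∏ j, (K' j * x j)

/-- The SRLK steady-state equations at ligand concentration `L`. -/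
def srlkSteady (n : ℕ) (K0 : ℝ) (K K' : Fin (n+1) → ℝ) (Nz : ℝ)
    (N : Fin (n+1) → ℝ) (L z : ℝ) (x : Fin (n+1) → ℝ) : Prop :=
  Nz = z + K0 * z * (x 0 + ∑ j ∈ Finset.Ioi (0 : Fin (n+1)),
      (∏ l ∈ Finset.Iio j, (K l * x l)) * x j) + srlkSigma n K0 K z L x ∧
  N 0 = x 0 + (∑ j ∈ Finset.Ioi (0 : Fin (n+1)),
        (∏ l ∈ Finset.Iio j, (K' l * x l)) * x j)
      + srlkDelta n K' L x
      + K0 * z * (x 0 + ∑ j ∈ Finset.Ioi (0 : Fin (n+1)),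
        (∏ l ∈ Finset.Iio j, (K l * x l)) * x j)
      + srlkSigma n K0 K z L x ∧
  ∀ i : Fin (n+1), 0 < i →
    N i = x i + (∑ j ∈ Finset.Ici i,
        ((∏ l ∈ Finset.Iio j, (K' l * x l)) * x j
          + K0 * z * (∏ l ∈ Finset.Iio j, (K l * x l)) * x j))
      + srlkDelta n K' L x + srlkSigma n K0 K z L x

/-- `f` is an algebraic function on `(0, ∞)`: it satisfies a monic polynomial equation
whose coefficients are rational functions with denominators nowhere vanishing on
`(0, ∞)`. -/
def AlgebraicOnIoi (f : ℝ → ℝ) : Prop :=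
  ∃ m : ℕ, 1 ≤ m ∧ ∃ p q : Fin m → Polynomial ℝ,
    (∀ i : Fin m, ∀ L : ℝ, 0 < L → (q i).eval L ≠ 0) ∧
    ∀ L : ℝ, 0 < L →
      f L ^ m + ∑ i : Fin m, ((p i).eval L / (q i).eval L) * f L ^ (i : ℕ) = 0

/-- An SRLK steady-state branch: continuous positive functions `z, x_1, …, x_{n+1}` on
`(0, ∞)` satisfying the SRLK steady-state equations for every `L > 0`, with
`z`, each `x_i`, `σ` and `δ` bounded and algebraic on `(0, ∞)`. -/
structure SRLKBranch (n : ℕ) (K0 : ℝ) (K K' : Fin (n+1) → ℝ) (Nz : ℝ)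
    (N : Fin (n+1) → ℝ) (z : ℝ → ℝ) (x : Fin (n+1) → ℝ → ℝ) : Prop where
  contZ : ContinuousOn z (Set.Ioi 0)
  contX : ∀ i, ContinuousOn (x i) (Set.Ioi 0)
  posZ : ∀ L : ℝ, 0 < L → 0 < z L
  posX : ∀ i, ∀ L : ℝ, 0 < L → 0 < x i L
  steady : ∀ L : ℝ, 0 < L → srlkSteady n K0 K K' Nz N L (z L) (fun i => x i L)
  bddZ : ∃ C : ℝ, ∀ L : ℝ, 0 < L → |z L| ≤ C
  bddX : ∀ i, ∃ C : ℝ, ∀ L : ℝ, 0 < L → |x i L| ≤ C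
  bddSigma : ∃ C : ℝ, ∀ L : ℝ, 0 < L →
    |srlkSigma n K0 K (z L) L (fun i => x i L)| ≤ C
  bddDelta : ∃ C : ℝ, ∀ L : ℝ, 0 < L → |srlkDelta n K' L (fun i => x i L)| ≤ C
  algZ : AlgebraicOnIoi z
  algX : ∀ i, AlgebraicOnIoi (x i)
  algSigma : AlgebraicOnIoi (fun L => srlkSigma n K0 K (z L) L (fun i => x i L))
  algDelta : AlgebraicOnIoi (fun L => srlkDelta n K' L (fun i => x i L))

/-! Each of `z`, `x i`, `σ`, `δ` converges as `L → ∞`: a bounded continuous `f` with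
`P(L, f L) = 0` for a nonzero polynomial `P` converges, since otherwise, by the intermediate value
theorem, every `c` strictly between `liminf f` and `limsup f` is attained at arbitrarily large `L`,
so `P(·, c) = 0` for infinitely many `c` and `P = 0`.

In the limit the `i`-th chain equation reads `N i = ℓᵢ + δ∞ + σ∞` with `ℓᵢ ≥ 0`, and `ℓᵢ = 0`
when `x i` tends to `0`. As `δ / L = ∏ K'ⱼ xⱼ → 0`, some `x j` tends to `0`, and any such `j`
has minimal `N j`; so this happens exactly for `j = i0`. Then `N i0 = δ∞ + σ∞`, where `σ∞` is a
nonnegative multiple of `δ∞`, so `δ∞ > 0` and `L · x i0 = δ / (K' i0 ∏_{j ≠ i0} K'ⱼ xⱼ)` has a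
positive limit. -/

open Filter Topology Set Polynomial
open scoped Polynomial.Bivariate

theorem ContinuousOn.frequently_eq_of_frequently_lt_of_frequently_gt {f : ℝ → ℝ} {a c : ℝ}
    (hf : ContinuousOn f (Ioi a)) (hlt : ∃ᶠ x in atTop, f x < c)
    (hgt : ∃ᶠ x in atTop, c < f x) : ∃ᶠ x in atTop, f x = c := by
  refine frequently_atTop.2 fun M => ?_
  obtain ⟨x₁, hx₁, hfx₁⟩ := frequently_atTop.1 hlt (max M (a + 1))
  obtain ⟨x₂, hx₂, hfx₂⟩ := frequently_atTop.1 hgt x₁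
  have hsub : Icc x₁ x₂ ⊆ Ioi a := fun t ht =>
    lt_of_lt_of_le (by linarith [le_max_right M (a + 1)]) ht.1
  obtain ⟨x, hx, hfx⟩ := intermediate_value_Icc hx₂ (hf.mono hsub) ⟨hfx₁.le, hfx₂.le⟩
  exact ⟨x, (le_max_left M _).trans (hx₁.trans hx.1), hfx⟩

theorem Polynomial.eq_zero_of_frequently_isRoot_atTop {p : ℝ[X]}
    (h : ∃ᶠ x in atTop, p.IsRoot x) : p = 0 :=
  p.eq_zero_of_infinite_isRoot
    (frequently_cofinite_iff_infinite.1 (h.filter_mono atTop_le_cofinite))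

theorem Polynomial.exists_map_evalRingHom_ne_zero {P : ℝ[X][Y]} (hP : P ≠ 0) :
    ∃ L : ℝ, P.map (evalRingHom L) ≠ 0 := by
  by_contra! h
  refine hP (Polynomial.ext fun k => Polynomial.funext fun L => ?_)
  simpa using congrArg (coeff · k) (h L)

theorem exists_tendsto_atTop_of_evalEval_eq_zero {f : ℝ → ℝ} {a : ℝ}
    (hf : ContinuousOn f (Ioi a)) (hbdd : IsBoundedUnder (· ≤ ·) atTop fun x => |f x|)
    {P : ℝ[X][Y]} (hP : P ≠ 0) (hPf : ∀ᶠ x in atTop, P.evalEval x (f x) = 0) :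
    ∃ c, Tendsto f atTop (𝓝 c) := by
  obtain ⟨hle, hge⟩ := isBoundedUnder_le_abs.1 hbdd
  obtain ⟨L₁, hL₁⟩ := exists_map_evalRingHom_ne_zero hP
  refine ⟨limsup f atTop, tendsto_of_liminf_eq_limsup ?_ rfl hle hge⟩
  refine (liminf_le_limsup hle hge).antisymm (not_lt.1 fun hlt => hL₁ ?_)
  refine eq_zero_of_infinite_isRoot _ ((Ioo_infinite hlt).mono fun c hc => ?_)
  have hfc : ∃ᶠ x in atTop, f x = c :=
    hf.frequently_eq_of_frequently_lt_of_frequently_gt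
      (frequently_lt_of_liminf_lt hle.isCoboundedUnder_ge hc.1)
      (frequently_lt_of_lt_limsup hge.isCoboundedUnder_le hc.2)
  have hPc : P.eval (C c) = 0 := eq_zero_of_frequently_isRoot_atTop <|
    (hfc.and_eventually hPf).mono fun x ⟨hx, h⟩ => by rwa [hx] at h
  show (P.map (evalRingHom L₁)).IsRoot c
  rw [IsRoot, map_evalRingHom_eval, evalEval, hPc, eval_zero]

theorem AlgebraicOnIoi.exists_evalEval_eq_zero {f : ℝ → ℝ} (hf : AlgebraicOnIoi f) :
    ∃ P : ℝ[X][Y], P ≠ 0 ∧ ∀ L, 0 < L → P.evalEval L (f L) = 0 := by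
  obtain ⟨m, -, p, q, hq, hpq⟩ := hf
  refine ⟨C (∏ i, q i) * Y ^ m
      + ∑ i : Fin m, C (p i * ∏ j ∈ Finset.univ.erase i, q j) * Y ^ (i : ℕ),
    fun hP => ?_, fun L hL => ?_⟩
  · have hQ : ∏ i, q i ≠ 0 :=
      Finset.prod_ne_zero_iff.2 fun i _ h => hq i 1 one_pos (by rw [h, eval_zero])
    have hm := congrArg (coeff · m) hP
    rw [coeff_add, coeff_C_mul_X_pow, if_pos rfl,
      coeff_eq_zero_of_degree_lt (degree_sum_fin_lt _), add_zero] at hm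
    exact hQ hm
  · simp only [evalEval_add, evalEval_mul, evalEval_C, evalEval_pow, evalEval_X,
      evalEval_finsetSum, eval_mul, eval_prod]
    rw [← mul_zero (∏ i, (q i).eval L), ← hpq L hL, mul_add, Finset.mul_sum]
    congr 1
    refine Finset.sum_congr rfl fun i _ => ?_
    rw [← Finset.mul_prod_erase _ _ (Finset.mem_univ i)]
    field_simp [hq i L hL]

theorem AlgebraicOnIoi.exists_tendsto_atTop {f : ℝ → ℝ} (hf : AlgebraicOnIoi f)
    (hc : ContinuousOn f (Ioi 0)) (hb : ∃ B, ∀ L, 0 < L → |f L| ≤ B) :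
    ∃ c, Tendsto f atTop (𝓝 c) := by
  obtain ⟨P, hP, hPf⟩ := hf.exists_evalEval_eq_zero
  obtain ⟨B, hB⟩ := hb
  exact exists_tendsto_atTop_of_evalEval_eq_zero hc
    ⟨B, eventually_map.2 <| (eventually_gt_atTop 0).mono hB⟩ hP
    ((eventually_gt_atTop 0).mono hPf)

/-- `N i - δ - σ` in the `i`-th chain equation of `srlkSteady`. -/
def srlkLoad (n : ℕ) (K0 : ℝ) (K K' : Fin (n+1) → ℝ) (z : ℝ) (x : Fin (n+1) → ℝ)
    (i : Fin (n+1)) : ℝ :=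
  if i = 0 then
    x 0 + (∑ j ∈ Finset.Ioi (0 : Fin (n+1)), (∏ l ∈ Finset.Iio j, (K' l * x l)) * x j)
      + K0 * z * (x 0 + ∑ j ∈ Finset.Ioi (0 : Fin (n+1)),
        (∏ l ∈ Finset.Iio j, (K l * x l)) * x j)
  else
    x i + ∑ j ∈ Finset.Ici i,
      ((∏ l ∈ Finset.Iio j, (K' l * x l)) * x j
        + K0 * z * (∏ l ∈ Finset.Iio j, (K l * x l)) * x j)

section Load

variable {n : ℕ} {K0 : ℝ} {K K' : Fin (n+1) → ℝ} {z : ℝ} {x : Fin (n+1) → ℝ}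

theorem srlkSteady.eq_srlkLoad_add {Nz L : ℝ} {N : Fin (n+1) → ℝ}
    (h : srlkSteady n K0 K K' Nz N L z x) (i : Fin (n+1)) :
    N i = srlkLoad n K0 K K' z x i + srlkDelta n K' L x + srlkSigma n K0 K z L x := by
  obtain ⟨-, h0, hi⟩ := h
  unfold srlkLoad
  split_ifs with hi0
  · rw [hi0, h0]; ring
  · exact hi i (Fin.pos_of_ne_zero hi0)

theorem continuous_srlkLoad (i : Fin (n+1)) :
    Continuous fun p : ℝ × (Fin (n+1) → ℝ) => srlkLoad n K0 K K' p.1 p.2 i := by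
  unfold srlkLoad
  split_ifs <;> fun_prop

theorem prod_Iio_mul_eq_zero (k : Fin (n+1) → ℝ) {i j : Fin (n+1)} (hx : x i = 0)
    (hij : i ≤ j) : (∏ l ∈ Finset.Iio j, (k l * x l)) * x j = 0 := by
  rcases hij.eq_or_lt with rfl | hij
  · rw [hx, mul_zero]
  · rw [Finset.prod_eq_zero (Finset.mem_Iio.2 hij) (by rw [hx, mul_zero]), zero_mul]

theorem srlkLoad_eq_zero {i : Fin (n+1)} (hx : x i = 0) : srlkLoad n K0 K K' z x i = 0 := by
  unfold srlkLoad
  split_ifs with hi0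
  · subst hi0
    simp only [prod_Iio_mul_eq_zero _ hx (Fin.zero_le _), hx, Finset.sum_const_zero]
    ring
  · rw [Finset.sum_eq_zero fun j hj => ?_, hx, add_zero]
    rw [mul_assoc, prod_Iio_mul_eq_zero _ hx (Finset.mem_Ici.1 hj),
      prod_Iio_mul_eq_zero _ hx (Finset.mem_Ici.1 hj), mul_zero, add_zero]

theorem prod_Iio_mul_nonneg {k : Fin (n+1) → ℝ} (hk : ∀ l, 0 ≤ k l) (hx : ∀ l, 0 ≤ x l)
    (j : Fin (n+1)) : 0 ≤ (∏ l ∈ Finset.Iio j, (k l * x l)) * x j :=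
  mul_nonneg (Finset.prod_nonneg fun l _ => mul_nonneg (hk l) (hx l)) (hx j)

theorem srlkLoad_nonneg (hK0 : 0 ≤ K0) (hK : ∀ l, 0 ≤ K l) (hK' : ∀ l, 0 ≤ K' l) (hz : 0 ≤ z)
    (hx : ∀ l, 0 ≤ x l) (i : Fin (n+1)) : 0 ≤ srlkLoad n K0 K K' z x i := by
  have hK0z := mul_nonneg hK0 hz
  unfold srlkLoad
  split_ifs
  · exact add_nonneg
      (add_nonneg (hx 0) (Finset.sum_nonneg fun j _ => prod_Iio_mul_nonneg hK' hx j))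
      (mul_nonneg hK0z
        (add_nonneg (hx 0) (Finset.sum_nonneg fun j _ => prod_Iio_mul_nonneg hK hx j)))
  · refine add_nonneg (hx i)
      (Finset.sum_nonneg fun j _ => add_nonneg (prod_Iio_mul_nonneg hK' hx j) ?_)
    rw [mul_assoc]
    exact mul_nonneg hK0z (prod_Iio_mul_nonneg hK hx j)

end Load

section Limits

variable {n : ℕ} {K0 : ℝ} {K K' : Fin (n+1) → ℝ} {z : ℝ → ℝ} {x : Fin (n+1) → ℝ → ℝ}
  {zs ds ss : ℝ} {xs : Fin (n+1) → ℝ}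

theorem srlkSigma_mul_prod (z L : ℝ) (x : Fin (n+1) → ℝ) :
    srlkSigma n K0 K z L x * ∏ j, K' j = K0 * z * (∏ j, K j) * srlkDelta n K' L x := by
  simp only [srlkSigma, srlkDelta, Finset.prod_mul_distrib]
  ring

theorem srlkSigma_limit_mul_prod (hz : Tendsto z atTop (𝓝 zs))
    (hd : Tendsto (fun L => srlkDelta n K' L fun i => x i L) atTop (𝓝 ds))
    (hs : Tendsto (fun L => srlkSigma n K0 K (z L) L fun i => x i L) atTop (𝓝 ss)) :
    ss * ∏ j, K' j = K0 * zs * (∏ j, K j) * ds :=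
  tendsto_nhds_unique (hs.mul_const _) <|
    (((hz.const_mul K0).mul_const _).mul hd).congr fun _ => (srlkSigma_mul_prod _ _ _).symm

theorem prod_limit_eq_zero_of_tendsto_srlkDelta (hx : ∀ i, Tendsto (x i) atTop (𝓝 (xs i)))
    (hd : Tendsto (fun L => srlkDelta n K' L fun i => x i L) atTop (𝓝 ds)) :
    ∏ j, K' j * xs j = 0 := by
  refine tendsto_nhds_unique (tendsto_finsetProd _ fun j _ => (hx j).const_mul (K' j)) ?_
  refine (hd.div_atTop tendsto_id).congr' ((eventually_gt_atTop 0).mono fun L hL => ?_)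
  rw [srlkDelta, id, mul_div_cancel_left₀ _ hL.ne']

theorem tendsto_mul_of_tendsto_srlkDelta {i0 : Fin (n+1)} (hK' : ∀ j, K' j ≠ 0)
    (hx : ∀ i, Tendsto (x i) atTop (𝓝 (xs i))) (hxs : ∀ j, j ≠ i0 → xs j ≠ 0)
    (hd : Tendsto (fun L => srlkDelta n K' L fun i => x i L) atTop (𝓝 ds)) :
    Tendsto (fun L => L * x i0 L) atTop
      (𝓝 (ds / (K' i0 * ∏ j ∈ Finset.univ.erase i0, K' j * xs j))) := by
  have hD : Tendsto (fun L => K' i0 * ∏ j ∈ Finset.univ.erase i0, K' j * x j L) atTop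
      (𝓝 (K' i0 * ∏ j ∈ Finset.univ.erase i0, K' j * xs j)) :=
    (tendsto_finsetProd _ fun j _ => (hx j).const_mul (K' j)).const_mul (K' i0)
  have hD0 : K' i0 * ∏ j ∈ Finset.univ.erase i0, K' j * xs j ≠ 0 :=
    mul_ne_zero (hK' i0) (Finset.prod_ne_zero_iff.2 fun j hj =>
      mul_ne_zero (hK' j) (hxs j (Finset.ne_of_mem_erase hj)))
  refine (hd.div hD hD0).congr' ((hD.eventually_ne hD0).mono fun L hL => ?_)
  rw [Pi.div_apply, div_eq_iff hL, srlkDelta, ← Finset.mul_prod_erase _ _ (Finset.mem_univ i0)]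
  ring

end Limits

namespace SRLKBranch

variable {n : ℕ} {K0 : ℝ} {K K' : Fin (n+1) → ℝ} {Nz : ℝ} {N : Fin (n+1) → ℝ} {z : ℝ → ℝ}
  {x : Fin (n+1) → ℝ → ℝ} {zs ds ss : ℝ} {xs : Fin (n+1) → ℝ}

theorem exists_tendsto_srlkDelta (hbr : SRLKBranch n K0 K K' Nz N z x) :
    ∃ ds, Tendsto (fun L => srlkDelta n K' L fun i => x i L) atTop (𝓝 ds) :=
  hbr.algDelta.exists_tendsto_atTop (by unfold srlkDelta; have := hbr.contX; fun_prop)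
    hbr.bddDelta

theorem exists_tendsto_srlkSigma (hbr : SRLKBranch n K0 K K' Nz N z x) :
    ∃ ss, Tendsto (fun L => srlkSigma n K0 K (z L) L fun i => x i L) atTop (𝓝 ss) :=
  hbr.algSigma.exists_tendsto_atTop
    (by unfold srlkSigma; have := hbr.contX; have := hbr.contZ; fun_prop) hbr.bddSigma

theorem eq_srlkLoad_limit_add (hbr : SRLKBranch n K0 K K' Nz N z x)
    (hz : Tendsto z atTop (𝓝 zs)) (hx : ∀ i, Tendsto (x i) atTop (𝓝 (xs i)))
    (hd : Tendsto (fun L => srlkDelta n K' L fun i => x i L) atTop (𝓝 ds))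
    (hs : Tendsto (fun L => srlkSigma n K0 K (z L) L fun i => x i L) atTop (𝓝 ss))
    (i : Fin (n+1)) : N i = srlkLoad n K0 K K' zs xs i + ds + ss := by
  have hload := ((continuous_srlkLoad (K0 := K0) (K := K) (K' := K') i).tendsto (zs, xs)).comp
    (hz.prodMk_nhds (tendsto_pi_nhds.2 hx))
  refine tendsto_nhds_unique (tendsto_const_nhds.congr' ?_) ((hload.add hd).add hs)
  filter_upwards [eventually_gt_atTop 0] with L hL using (hbr.steady L hL).eq_srlkLoad_add i

theorem limit_z_nonneg (hbr : SRLKBranch n K0 K K' Nz N z x) (hz : Tendsto z atTop (𝓝 zs)) :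
    0 ≤ zs :=
  ge_of_tendsto hz ((eventually_gt_atTop 0).mono fun L hL => (hbr.posZ L hL).le)

theorem limit_x_nonneg (hbr : SRLKBranch n K0 K K' Nz N z x) {i : Fin (n+1)}
    (hx : Tendsto (x i) atTop (𝓝 (xs i))) : 0 ≤ xs i :=
  ge_of_tendsto hx ((eventually_gt_atTop 0).mono fun L hL => (hbr.posX i L hL).le)

theorem le_of_limit_eq_zero (hbr : SRLKBranch n K0 K K' Nz N z x) (hK0 : 0 ≤ K0)
    (hK : ∀ l, 0 ≤ K l) (hK' : ∀ l, 0 ≤ K' l)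
    (hz : Tendsto z atTop (𝓝 zs)) (hx : ∀ i, Tendsto (x i) atTop (𝓝 (xs i)))
    (hd : Tendsto (fun L => srlkDelta n K' L fun i => x i L) atTop (𝓝 ds))
    (hs : Tendsto (fun L => srlkSigma n K0 K (z L) L fun i => x i L) atTop (𝓝 ss))
    {i : Fin (n+1)} (hxi : xs i = 0) (j : Fin (n+1)) : N i ≤ N j := by
  rw [hbr.eq_srlkLoad_limit_add hz hx hd hs, hbr.eq_srlkLoad_limit_add hz hx hd hs,
    srlkLoad_eq_zero hxi]
  linarith [srlkLoad_nonneg hK0 hK hK' (hbr.limit_z_nonneg hz)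
    (fun l => hbr.limit_x_nonneg (hx l)) j]

theorem limit_srlkDelta_pos (hbr : SRLKBranch n K0 K K' Nz N z x) (hK0 : 0 ≤ K0)
    (hK : ∀ l, 0 ≤ K l) (hK' : ∀ l, 0 < K' l)
    (hz : Tendsto z atTop (𝓝 zs)) (hx : ∀ i, Tendsto (x i) atTop (𝓝 (xs i)))
    (hd : Tendsto (fun L => srlkDelta n K' L fun i => x i L) atTop (𝓝 ds))
    (hs : Tendsto (fun L => srlkSigma n K0 K (z L) L fun i => x i L) atTop (𝓝 ss))
    {i : Fin (n+1)} (hNi : 0 < N i) (hxi : xs i = 0) : 0 < ds := by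
  have hNi_eq := hbr.eq_srlkLoad_limit_add hz hx hd hs i
  rw [srlkLoad_eq_zero hxi, zero_add] at hNi_eq
  have hss := srlkSigma_limit_mul_prod hz hd hs
  have hK'pos : 0 < ∏ j, K' j := Finset.prod_pos fun j _ => hK' j
  have hc : 0 ≤ K0 * zs * ∏ j, K j :=
    mul_nonneg (mul_nonneg hK0 (hbr.limit_z_nonneg hz)) (Finset.prod_nonneg fun j _ => hK j)
  nlinarith

end SRLKBranch

theorem srlk_unique_limiting_component_general
    (n : ℕ) (K0 : ℝ) (K K' : Fin (n+1) → ℝ) (Nz : ℝ) (N : Fin (n+1) → ℝ)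
    (hK0 : 0 < K0) (hK : ∀ i, 0 < K i) (hK' : ∀ i, 0 < K' i)
    (hN : ∀ i, 0 < N i)
    (z : ℝ → ℝ) (x : Fin (n+1) → ℝ → ℝ)
    (hbr : SRLKBranch n K0 K K' Nz N z x)
    (i0 : Fin (n+1)) (hlim : ∀ i, i ≠ i0 → N i0 < N i) :
    (∃ c : ℝ, 0 < c ∧
      Filter.Tendsto (fun L : ℝ => L * x i0 L) Filter.atTop (nhds c)) ∧
    (∀ i, i ≠ i0 → ∃ c : ℝ, 0 < c ∧
      Filter.Tendsto (x i) Filter.atTop (nhds c)) := by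
  obtain ⟨zs, hz⟩ := hbr.algZ.exists_tendsto_atTop hbr.contZ hbr.bddZ
  choose xs hx using fun i => (hbr.algX i).exists_tendsto_atTop (hbr.contX i) (hbr.bddX i)
  obtain ⟨ds, hd⟩ := hbr.exists_tendsto_srlkDelta
  obtain ⟨ss, hs⟩ := hbr.exists_tendsto_srlkSigma
  have hxs_pos : ∀ i, i ≠ i0 → 0 < xs i := fun i hi =>
    (hbr.limit_x_nonneg (hx i)).lt_of_ne' fun h => (hlim i hi).not_ge
      (hbr.le_of_limit_eq_zero hK0.le (hK · |>.le) (hK' · |>.le) hz hx hd hs h i0)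
  have hxi0 : xs i0 = 0 := by
    obtain ⟨j, -, hj⟩ :=
      Finset.prod_eq_zero_iff.1 (prod_limit_eq_zero_of_tendsto_srlkDelta hx hd)
    have hxj : xs j = 0 := (mul_eq_zero.1 hj).resolve_left (hK' j).ne'
    obtain rfl : j = i0 := by_contra fun hj0 => (hxs_pos j hj0).ne' hxj
    exact hxj
  have hds : 0 < ds :=
    hbr.limit_srlkDelta_pos hK0.le (hK · |>.le) hK' hz hx hd hs (hN i0) hxi0
  refine ⟨⟨_, div_pos hds ?_, tendsto_mul_of_tendsto_srlkDelta (hK' · |>.ne') hx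
    (hxs_pos · · |>.ne') hd⟩, fun i hi => ⟨xs i, hxs_pos i hi, hx i⟩⟩
  exact mul_pos (hK' i0)
    (Finset.prod_pos fun j hj => mul_pos (hK' j) (hxs_pos j (Finset.ne_of_mem_erase hj)))

/-- along any SRLK steady-state branch with a unique limiting component
`X_{i0}`, one has `L·x_{i0}(L) → c_{i0} > 0`, and every other `x_i` tends to a
strictly positive constant, as `L → +∞`. -/
theorem srlk_unique_limiting_component
    (n : ℕ) (K0 : ℝ) (K K' : Fin (n+1) → ℝ) (Nz : ℝ) (N : Fin (n+1) → ℝ)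
    (hK0 : 0 < K0) (hK : ∀ i, 0 < K i) (hK' : ∀ i, 0 < K' i)
    (hNz : 0 < Nz) (hN : ∀ i, 0 < N i)
    (z : ℝ → ℝ) (x : Fin (n+1) → ℝ → ℝ)
    (hbr : SRLKBranch n K0 K K' Nz N z x)
    (i0 : Fin (n+1)) (hlim : ∀ i, i ≠ i0 → N i0 < N i) :
    (∃ c : ℝ, 0 < c ∧
      Filter.Tendsto (fun L : ℝ => L * x i0 L) Filter.atTop (nhds c)) ∧
    (∀ i, i ≠ i0 → ∃ c : ℝ, 0 < c ∧
      Filter.Tendsto (x i) Filter.atTop (nhds c)) :=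
  srlk_unique_limiting_component_general n K0 K K' Nz N hK0 hK hK' hN z x hbr i0 hlim
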